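/- For every integer L ≥ 1, every K ∈ {1,…,L} and every s ∈ ℝ^L, topsum_{K,ε}(s) converges to topsum_K(s) as ε → 0⁺. -/

import Mathlib

open MeasureTheory ProbabilityTheory

/-- The list of coordinates of `s : ℝ^L` sorted in decreasing order. -/
noncomputable def descSort {L : ℕ} (s : Fin L → ℝ) : List ℝ :=
  (Multiset.sort (Multiset.map s Finset.univ.val) (· ≤ ·)).reverse

/-- `kthLargest K s` is the `K`-th largest coordinate of `s` (1-indexed), i.e. `s_(K)`. -/
noncomputable def kthLargest {L : ℕ} (K : ℕ) (s : Fin L → ℝ) : ℝ :=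
  (descSort s).getD (K - 1) 0

/-- `topsum K s` is the sum of the `K` largest coordinates of `s`,
with the convention `topsum 0 s = 0`. -/
noncomputable def topsum {L : ℕ} (K : ℕ) (s : Fin L → ℝ) : ℝ :=
  ((descSort s).take K).sum

/-- The standard Gaussian measure `N(0, Id_L)` on `ℝ^L`:
the coordinates are i.i.d. standard normal random variables. -/
noncomputable def stdGaussian (L : ℕ) : Measure (EuclideanSpace ℝ (Fin L)) :=
  (Measure.pi (fun _ : Fin L => gaussianReal 0 1)).map (MeasurableEquiv.toLp 2 (Fin L → ℝ))

/-- The smoothed top-sum `topsumSm K ε s = E[topsum K (s + ε Z)]`, `Z ∼ N(0, Id_L)`. -/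
noncomputable def topsumSm {L : ℕ} (K : ℕ) (ε : ℝ) (s : EuclideanSpace ℝ (Fin L)) : ℝ :=
  ∫ z, topsum K (s + ε • z) ∂(stdGaussian L)

/-- The smoothed top-K operator `topSm K ε s = topsumSm K ε s - topsumSm (K-1) ε s`. -/
noncomputable def topSm {L : ℕ} (K : ℕ) (ε : ℝ) (s : EuclideanSpace ℝ (Fin L)) : ℝ :=
  topsumSm K ε s - topsumSm (K - 1) ε s

/-- The 0/1 vector whose entries equal 1 exactly at the `K` coordinates carrying the
`K` largest values of `v` (well defined when the `K`-th and `(K+1)`-th largest values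
of `v` are distinct). -/
noncomputable def argtops {L : ℕ} (K : ℕ) (v : Fin L → ℝ) : Fin L → ℝ :=
  fun i => if kthLargest K v ≤ v i then 1 else 0

/-! `topsum K s` is the largest sum of `s` over a `K`-element set of coordinates, so it is
`1`-Lipschitz for the `ℓ¹` distance. Hence `|topsum_{K,ε}(s) - topsum_K(s)| ≤ ε E‖Z‖₁`,
which is finite since Gaussian coordinates are integrable. -/

theorem Multiset.exists_le_map_eq_of_le_map {α β : Type*} {f : α → β} {m : Multiset α}
    {t : Multiset β} (h : t ≤ m.map f) : ∃ m' ≤ m, m'.map f = t := by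
  induction m using Quotient.inductionOn with | _ l =>
  induction t using Quotient.inductionOn with | _ l₁ =>
  obtain ⟨l₂, hperm, hsub⟩ := Multiset.coe_le.mp h
  obtain ⟨l', hl', rfl⟩ := List.sublist_map_iff.mp hsub
  exact ⟨l', Multiset.coe_le.mpr hl'.subperm, Multiset.coe_eq_coe.mpr hperm⟩

section SortedSums

variable {α : Type*} [AddCommMonoid α] [PartialOrder α] [IsOrderedAddMonoid α]

theorem List.sum_take_le_sum_take_cons {a : α} {l : List α} (ha : ∀ x ∈ l, x ≤ a) {k : ℕ}
    (hk : k ≤ l.length) : (l.take k).sum ≤ ((a :: l).take k).sum := by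
  cases k with
  | zero => simp
  | succ j =>
    rw [List.sum_take_succ l j hk, List.take_succ_cons, List.sum_cons, add_comm]
    exact add_le_add_left (ha _ (List.getElem_mem hk)) _

theorem List.Pairwise.multiset_sum_le_sum_take {l : List α} (hl : l.Pairwise (· ≥ ·))
    {t : Multiset α} (ht : t ≤ l) : t.sum ≤ (l.take (Multiset.card t)).sum := by
  induction l generalizing t with
  | nil => simp [Multiset.le_zero.mp ht]
  | cons a l ih =>
    obtain ⟨ha, hl⟩ := List.pairwise_cons.mp hl
    rw [← Multiset.cons_coe] at ht
    by_cases hat : a ∈ t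
    · obtain ⟨t', rfl⟩ := Multiset.exists_cons_of_mem hat
      rw [Multiset.card_cons, Multiset.sum_cons, List.take_succ_cons, List.sum_cons]
      exact add_le_add_right (ih hl ((Multiset.cons_le_cons_iff a).mp ht)) a
    · have ht' : t ≤ l := (Multiset.le_cons_of_notMem hat).mp ht
      exact (ih hl ht').trans (List.sum_take_le_sum_take_cons ha
        (by simpa using Multiset.card_le_card ht'))

end SortedSums

section Topsum

variable {L : ℕ}

theorem coe_descSort (s : Fin L → ℝ) :
    (descSort s : Multiset ℝ) = Multiset.map s Finset.univ.val := by
  rw [descSort, Multiset.coe_reverse, Multiset.sort_eq]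

theorem length_descSort (s : Fin L → ℝ) : (descSort s).length = L := by
  simpa using congrArg Multiset.card (coe_descSort s)

theorem pairwise_descSort (s : Fin L → ℝ) : (descSort s).Pairwise (· ≥ ·) := by
  rw [descSort, List.pairwise_reverse]
  exact Multiset.pairwise_sort _ _

theorem sum_le_topsum (s : Fin L → ℝ) (S : Finset (Fin L)) :
    ∑ i ∈ S, s i ≤ topsum S.card s := by
  have hle : Multiset.map s S.val ≤ descSort s := by
    rw [coe_descSort]
    exact Multiset.map_le_map (Finset.val_le_iff.mpr S.subset_univ)
  simpa [topsum] using (pairwise_descSort s).multiset_sum_le_sum_take hle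

theorem exists_sum_eq_topsum {K : ℕ} (hKL : K ≤ L) (s : Fin L → ℝ) :
    ∃ S : Finset (Fin L), S.card = K ∧ ∑ i ∈ S, s i = topsum K s := by
  have htake : ((descSort s).take K : Multiset ℝ) ≤ Multiset.map s Finset.univ.val := by
    rw [← coe_descSort]
    exact Multiset.coe_le.mpr (List.take_sublist _ _).subperm
  obtain ⟨m, hm, hmap⟩ := Multiset.exists_le_map_eq_of_le_map htake
  refine ⟨⟨m, Multiset.nodup_of_le hm Finset.univ.nodup⟩, ?_, ?_⟩
  · simpa [length_descSort, hKL] using congrArg Multiset.card hmap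
  · simpa [Finset.sum, topsum] using congrArg Multiset.sum hmap

theorem topsum_sub_topsum_le {K : ℕ} (hKL : K ≤ L) (a b : Fin L → ℝ) :
    topsum K a - topsum K b ≤ ∑ i, |a i - b i| := by
  obtain ⟨S, rfl, hS⟩ := exists_sum_eq_topsum hKL a
  calc topsum S.card a - topsum S.card b ≤ ∑ i ∈ S, a i - ∑ i ∈ S, b i := by
        linarith [sum_le_topsum b S]
    _ = ∑ i ∈ S, (a i - b i) := (Finset.sum_sub_distrib ..).symm
    _ ≤ ∑ i ∈ S, |a i - b i| := Finset.sum_le_sum fun i _ => le_abs_self _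
    _ ≤ ∑ i, |a i - b i| := Finset.sum_le_sum_of_subset_of_nonneg S.subset_univ
        fun i _ _ => abs_nonneg _

theorem abs_topsum_sub_topsum_le {K : ℕ} (hKL : K ≤ L) (a b : Fin L → ℝ) :
    |topsum K a - topsum K b| ≤ ∑ i, |a i - b i| := by
  refine abs_sub_le_iff.mpr ⟨topsum_sub_topsum_le hKL a b, ?_⟩
  simpa only [abs_sub_comm] using topsum_sub_topsum_le hKL b a

theorem lipschitzWith_topsum {K : ℕ} (hKL : K ≤ L) :
    LipschitzWith L (topsum K : (Fin L → ℝ) → ℝ) := by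
  refine LipschitzWith.of_dist_le_mul fun a b => ?_
  calc dist (topsum K a) (topsum K b) ≤ ∑ i, |a i - b i| := abs_topsum_sub_topsum_le hKL a b
    _ ≤ ∑ _i : Fin L, dist a b := Finset.sum_le_sum fun i _ => dist_le_pi_dist a b i
    _ = L * dist a b := by simp

end Topsum

instance (L : ℕ) : IsProbabilityMeasure (stdGaussian L) :=
  Measure.isProbabilityMeasure_map (MeasurableEquiv.toLp 2 (Fin L → ℝ)).measurable.aemeasurable

theorem integrable_abs_apply_stdGaussian (L : ℕ) (i : Fin L) :
    Integrable (fun z : EuclideanSpace ℝ (Fin L) => |z i|) (stdGaussian L) := by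
  have hgauss : Integrable (fun x : ℝ => |x|) (gaussianReal 0 1) :=
    (memLp_one_iff_integrable.mp (memLp_id_gaussianReal 1)).abs
  rw [_root_.stdGaussian, integrable_map_equiv]
  exact (measurePreserving_eval _ i).integrable_comp_of_integrable hgauss

theorem abs_topsum_add_smul_sub_topsum_le {L K : ℕ} (hKL : K ≤ L)
    (s z : EuclideanSpace ℝ (Fin L)) (ε : ℝ) :
    |topsum K (s + ε • z) - topsum K s| ≤ |ε| * ∑ i, |z i| := by
  simpa [abs_mul, Finset.mul_sum] using abs_topsum_sub_topsum_le hKL (s + ε • z) s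

theorem abs_topsumSm_sub_topsum_le {L K : ℕ} (hKL : K ≤ L)
    (s : EuclideanSpace ℝ (Fin L)) (ε : ℝ) :
    |topsumSm K ε s - topsum K s| ≤ |ε| * ∫ z, ∑ i, |z i| ∂stdGaussian L := by
  set μ := stdGaussian L
  set f := fun z : EuclideanSpace ℝ (Fin L) => topsum K (s + ε • z)
  have hbound : ∀ z, ‖f z - topsum K s‖ ≤ |ε| * ∑ i, |z i| := fun z =>
    (Real.norm_eq_abs _).trans_le (abs_topsum_add_smul_sub_topsum_le hKL s z ε)
  have hg : Integrable (fun z : EuclideanSpace ℝ (Fin L) => |ε| * ∑ i, |z i|) μ :=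
    (integrable_finsetSum _ fun i _ => integrable_abs_apply_stdGaussian L i).const_mul _
  have hcont : Continuous f :=
    (lipschitzWith_topsum hKL).continuous.comp (PiLp.continuous_ofLp 2 _ |>.comp (by fun_prop))
  have hf : Integrable f μ := by
    refine ((hg.mono' (hcont.sub continuous_const).aestronglyMeasurable (.of_forall hbound)).add
      (integrable_const (topsum K s))).congr (.of_forall fun _ => ?_)
    exact sub_add_cancel _ _
  have hsub : topsumSm K ε s - topsum K s = ∫ z, (f z - topsum K s) ∂μ := by
    rw [integral_sub hf (integrable_const _)]
    simp [topsumSm, f, μ]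
  rw [hsub, ← integral_const_mul]
  exact norm_integral_le_of_norm_le hg (.of_forall hbound)

theorem topsumSm_tendsto_topsum_general (L K : ℕ) (hKL : K ≤ L)
    (s : EuclideanSpace ℝ (Fin L)) :
    Filter.Tendsto (fun ε : ℝ => topsumSm K ε s) (nhdsWithin 0 (Set.Ioi 0))
      (nhds (topsum K s)) := by
  set C := ∫ z, ∑ i, |z i| ∂stdGaussian L
  have hlin : Filter.Tendsto (fun ε : ℝ => |ε| * C) (nhds 0) (nhds 0) :=
    Continuous.tendsto' (by fun_prop) 0 0 (by simp)
  rw [tendsto_iff_norm_sub_tendsto_zero]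
  exact squeeze_zero (fun _ => norm_nonneg _) (fun ε => abs_topsumSm_sub_topsum_le hKL s ε)
    (hlin.mono_left nhdsWithin_le_nhds)

/-- `topsumSm K ε s → topsum K s` as `ε → 0⁺`. -/
theorem topsumSm_tendsto_topsum (L K : ℕ) (hL : 1 ≤ L) (hK1 : 1 ≤ K) (hKL : K ≤ L)
    (s : EuclideanSpace ℝ (Fin L)) :
    Filter.Tendsto (fun ε : ℝ => topsumSm K ε s) (nhdsWithin 0 (Set.Ioi 0))
      (nhds (topsum K s)) :=
  topsumSm_tendsto_topsum_general L K hKL s
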